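/- If R₁ and R₂ are symmetric FP-soft relations, then the composition R₁ ∘ R₂ is symmetric if and only if R₁ ∘ R₂ = R₂ ∘ R₁. -/
import Mathlib


variable {E U : Type*}

/-- An FP-soft relation assigns to each pair of parameters a membership degree
(a real number, intended to lie in [0,1]) and an approximate set. -/
def FPSoftRel (E U : Type*) := E × E → ℝ × Set U

/-- The inverse of an FP-soft relation: `R⁻¹(x,y) = R(y,x)`. -/
def FPSoftRel.inv (R : FPSoftRel E U) : FPSoftRel E U := fun p => R (p.2, p.1)

/-- `R` is valued in `[0,1] × Set U`. -/
def FPSoftRel.IsValid (R : FPSoftRel E U) : Prop :=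
  ∀ p : E × E, (R p).1 ∈ Set.Icc (0:ℝ) 1

/-- Composition of FP-soft relations: sup-min on degrees, union of intersections on sets. -/
noncomputable def FPSoftRel.comp (R S : FPSoftRel E U) : FPSoftRel E U := fun p =>
  (⨆ y : E, min (R (p.1, y)).1 (S (y, p.2)).1,
   ⋃ y : E, (R (p.1, y)).2 ∩ (S (y, p.2)).2)

/-- `R` is a symmetric FP-soft relation. -/
def FPSoftRel.IsSymm (R : FPSoftRel E U) : Prop := ∀ x y : E, R (x, y) = R (y, x)

/-- For symmetric `R₁, R₂`, the composition `R₁ ∘ R₂` is symmetric iff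
`R₁ ∘ R₂ = R₂ ∘ R₁`. -/
theorem FPSoftRel.comp_isSymm_iff_comm (R₁ R₂ : FPSoftRel E U)
    (h₁ : R₁.IsValid) (h₂ : R₂.IsValid)
    (hs₁ : R₁.IsSymm) (hs₂ : R₂.IsSymm) :
    (R₁.comp R₂).IsSymm ↔ R₁.comp R₂ = R₂.comp R₁ := by
  have key : ∀ x y : E, (R₁.comp R₂) (y, x) = (R₂.comp R₁) (x, y) := by
    intro x y
    simp only [FPSoftRel.comp, Prod.mk.injEq]
    constructor
    · apply iSup_congr
      intro a
      rw [hs₁ y a, hs₂ a x, min_comm]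
    · apply Set.iUnion_congr
      intro a
      rw [hs₁ y a, hs₂ a x, Set.inter_comm]
  constructor
  · intro h
    funext p
    rw [show p = (p.1, p.2) from rfl, ← key p.1 p.2, h]
  · intro h x y
    rw [key y x, h]
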